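/- In the divided powers algebra O_2(2,1) over a field of characteristic 5, the linear maps id - x∂_x (where x∂_x denotes multiplication by x^(1) composed with ∂_x) and ∂_x^5 commute, id - x∂_x is a generalized derivation, and ∂_x^5 is a derivation. -/

import Mathlib

open scoped BigOperators

/-- Multiplication of the divided powers algebra `O₂(2,1)` in characteristic 5,
realized on coefficient functions with respect to the basis
`x^(i) y^(j)`, `0 ≤ i < 25`, `0 ≤ j < 5`. -/
def dpMul2 {K : Type*} [Field K] (f g : Fin 25 × Fin 5 → K) : Fin 25 × Fin 5 → K :=
  fun k => ∑ i : Fin 25 × Fin 5, ∑ j : Fin 25 × Fin 5,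
    if (i.1 : ℕ) + (j.1 : ℕ) = (k.1 : ℕ) ∧ (i.2 : ℕ) + (j.2 : ℕ) = (k.2 : ℕ) then
      ((((i.1 : ℕ) + (j.1 : ℕ)).choose i.1 : K) * (((i.2 : ℕ) + (j.2 : ℕ)).choose i.2 : K))
        * f i * g j
    else 0

/-- The unit `1 = x^(0) y^(0)` of `O₂(2,1)`. -/
def dpOne2 {K : Type*} [Field K] : Fin 25 × Fin 5 → K :=
  fun k => if (k.1 : ℕ) = 0 ∧ (k.2 : ℕ) = 0 then 1 else 0

/-- The lowering derivation `∂_x` of `O₂(2,1)`. -/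
def dpDx {K : Type*} [Field K] (f : Fin 25 × Fin 5 → K) : Fin 25 × Fin 5 → K :=
  fun k => if h : (k.1 : ℕ) + 1 < 25 then f (⟨(k.1 : ℕ) + 1, h⟩, k.2) else 0

/-- The lowering derivation `∂_y` of `O₂(2,1)`. -/
def dpDy {K : Type*} [Field K] (f : Fin 25 × Fin 5 → K) : Fin 25 × Fin 5 → K :=
  fun k => if h : (k.2 : ℕ) + 1 < 5 then f (k.1, ⟨(k.2 : ℕ) + 1, h⟩) else 0

/-- The Poisson bracket `[a,b] = ∂_x(a)∂_y(b) - ∂_y(a)∂_x(b)` on `O₂(2,1)`. -/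
def pbr2 {K : Type*} [Field K] (a b : Fin 25 × Fin 5 → K) : Fin 25 × Fin 5 → K :=
  dpMul2 (dpDx a) (dpDy b) - dpMul2 (dpDy a) (dpDx b)

/-- The element `x = x^(1) y^(0)` of `O₂(2,1)`. -/
def xElt {K : Type*} [Field K] : Fin 25 × Fin 5 → K :=
  fun k => if (k.1 : ℕ) = 1 ∧ (k.2 : ℕ) = 0 then 1 else 0

/-- The generalized derivation `id - x∂_x` of `O₂(2,1)`. -/
def genE {K : Type*} [Field K] (f : Fin 25 × Fin 5 → K) : Fin 25 × Fin 5 → K :=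
  f - dpMul2 xElt (dpDx f)

/-!
In the basis `x^(i) y^(j)` the operator `x∂_x` is diagonal with eigenvalue `i`, so `id - x∂_x`
scales `x^(i) y^(j)` by `1 - i`. Since `(1 - a) + (1 - c) - 1 = 1 - (a + c)`, it is a generalized
derivation, and it commutes with `∂_x⁵` because `∂_x⁵` shifts `i` by `5 = 0`.

`∂_x⁵` is a derivation because `(1 + X)^(m + 5) = (1 + X)^m (1 + X^5)` in characteristic 5, i.e.
`C(m + 5, a) = C(m, a - 5) + C(m, a)`. The truncation `x^(a) = 0` for `a ≥ 25` is compatible with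
this: if `a, c < 25 ≤ a + c`, adding `a` and `c` in base 5 carries, so `5 ∣ C(a + c, a)` by
Kummer's theorem.
-/

open Finset

theorem Nat.Prime.dvd_choose_add_of_pow_le {p a b e : ℕ} (hp : p.Prime) (ha : a < p ^ e)
    (hb : b < p ^ e) (h : p ^ e ≤ a + b) : p ∣ (a + b).choose a := by
  have : Fact p.Prime := ⟨hp⟩
  have he : e ≠ 0 := by rintro rfl; rw [pow_zero] at ha hb h; omega
  have hcarry : e ∈ {i ∈ Ico 1 (Nat.log p (b + a) + 1) | p ^ i ≤ a % p ^ i + b % p ^ i} := by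
    rw [mem_filter, mem_Ico, Nat.mod_eq_of_lt ha, Nat.mod_eq_of_lt hb]
    exact ⟨⟨Nat.one_le_iff_ne_zero.2 he,
      Nat.lt_succ_of_le (Nat.le_log_of_pow_le hp.one_lt (by omega))⟩, h⟩
  apply dvd_of_one_le_padicValNat
  rw [add_comm a b, padicValNat_choose' (Nat.lt_succ_self _)]
  exact Finset.card_pos.2 ⟨e, hcarry⟩

theorem Nat.cast_choose_add_prime {R : Type*} [CommRing R] (p : ℕ) [Fact p.Prime] [CharP R p]
    (m a : ℕ) :
    ((m + p).choose a : R) = (if p ≤ a then (m.choose (a - p) : R) else 0) + m.choose a := by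
  have hfrob : ((Polynomial.X + 1) ^ (m + p) : Polynomial R)
      = (Polynomial.X + 1) ^ m * Polynomial.X ^ p + (Polynomial.X + 1) ^ m := by
    rw [pow_add, add_pow_char (p := p) (Polynomial.X : Polynomial R) 1, one_pow, mul_add,
      mul_one]
  have := congrArg (Polynomial.coeff · a) hfrob
  simpa only [Polynomial.coeff_add, Polynomial.coeff_mul_X_pow', Polynomial.coeff_X_add_one_pow,
    apply_ite] using this

section DividedPowerConvolution

variable {R : Type*} [CommRing R]

/-- The coefficient of `x^(M)` in `(∑ φ a x^(a)) (∑ ψ c x^(c))`, where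
`x^(a) x^(c) = C(a + c, a) x^(a + c)` with no truncation. -/
def dpConv (φ ψ : ℕ → R) (M : ℕ) : R :=
  ∑ x ∈ antidiagonal M, (M.choose x.1 : R) * φ x.1 * ψ x.2

theorem dpConv_eq_sum_range (φ ψ : ℕ → R) (M : ℕ) :
    dpConv φ ψ M = ∑ a ∈ range (M + 1), (M.choose a : R) * φ a * ψ (M - a) :=
  Nat.sum_antidiagonal_eq_sum_range_succ (fun a c => (M.choose a : R) * φ a * ψ c) M

theorem dpConv_ite_zero_right (φ : ℕ → R) (M : ℕ) :
    dpConv φ (fun c => if c = 0 then 1 else 0) M = φ M := by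
  rw [dpConv, sum_eq_single (M, 0)]
  · simp
  · rintro ⟨a, c⟩ hx hne
    have hc : c ≠ 0 := by rintro rfl; simp_all
    simp [hc]
  · simp

theorem dpConv_ite_one_left (ψ : ℕ → R) (M : ℕ) :
    dpConv (fun a => if a = 1 then 1 else 0) ψ M = M * ψ (M - 1) := by
  rw [dpConv_eq_sum_range]
  rcases M with _ | M
  · simp
  · rw [sum_eq_single 1]
    · simp
    · intro a _ ha
      simp [ha]
    · simp

theorem dpConv_add_prime (p : ℕ) [Fact p.Prime] [CharP R p] (φ ψ : ℕ → R) (M : ℕ) :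
    dpConv φ ψ (M + p)
      = dpConv (fun a => φ (a + p)) ψ M + dpConv φ (fun c => ψ (c + p)) M := by
  have hshift : ∑ a ∈ range (M + p + 1),
      (if p ≤ a then (M.choose (a - p) : R) else 0) * φ a * ψ (M + p - a)
        = dpConv (fun a => φ (a + p)) ψ M := by
    rw [dpConv_eq_sum_range, show M + p + 1 = p + (M + 1) by omega, sum_range_add,
      sum_eq_zero fun a ha => by simp [(mem_range.1 ha).not_ge], zero_add]
    refine sum_congr rfl fun a _ => ?_
    simp [add_comm p a, Nat.add_sub_add_right]
  have hkeep : ∑ a ∈ range (M + p + 1), (M.choose a : R) * φ a * ψ (M + p - a)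
        = dpConv φ (fun c => ψ (c + p)) M := by
    rw [dpConv_eq_sum_range, show M + p + 1 = M + 1 + p by omega, sum_range_add,
      add_eq_left.2 (sum_eq_zero fun a _ => by
        simp [Nat.choose_eq_zero_of_lt (by omega : M < M + 1 + a)])]
    refine sum_congr rfl fun a ha => ?_
    rw [Nat.sub_add_comm (Nat.lt_succ_iff.1 (mem_range.1 ha))]
  rw [dpConv_eq_sum_range, ← hshift, ← hkeep, ← sum_add_distrib]
  refine sum_congr rfl fun a _ => ?_
  rw [Nat.cast_choose_add_prime p, add_mul, add_mul]

theorem dpConv_eq_zero_of_pow_le (p : ℕ) [hp : Fact p.Prime] [CharP R p] {φ ψ : ℕ → R}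
    {e M : ℕ} (hφ : ∀ a, p ^ e ≤ a → φ a = 0) (hψ : ∀ c, p ^ e ≤ c → ψ c = 0)
    (hM : p ^ e ≤ M) :
    dpConv φ ψ M = 0 := by
  refine sum_eq_zero fun x hx => ?_
  rw [HasAntidiagonal.mem_antidiagonal] at hx
  by_cases ha : p ^ e ≤ x.1
  · rw [hφ _ ha, mul_zero, zero_mul]
  by_cases hc : p ^ e ≤ x.2
  · rw [hψ _ hc, mul_zero]
  have hdvd := hp.out.dvd_choose_add_of_pow_le (not_le.1 ha) (not_le.1 hc) (hx ▸ hM)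
  rw [← hx, (CharP.cast_eq_zero_iff R p _).2 hdvd, zero_mul, zero_mul]

end DividedPowerConvolution

section TruncatedAlgebra

variable {K : Type*} [Field K]

def extendByZero (f : Fin 25 × Fin 5 → K) (a b : ℕ) : K :=
  if h : a < 25 ∧ b < 5 then f (⟨a, h.1⟩, ⟨b, h.2⟩) else 0

theorem extendByZero_val (f : Fin 25 × Fin 5 → K) (k : Fin 25 × Fin 5) :
    extendByZero f k.1 k.2 = f k := by
  simp [extendByZero]

theorem extendByZero_of_le (f : Fin 25 × Fin 5 → K) {a : ℕ} (b : ℕ) (ha : 25 ≤ a) :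
    extendByZero f a b = 0 := by
  simp [extendByZero, not_lt.2 ha]

theorem extendByZero_dpDx (f : Fin 25 × Fin 5 → K) (a b : ℕ) :
    extendByZero (dpDx f) a b = extendByZero f (a + 1) b := by
  unfold extendByZero dpDx
  dsimp only
  split_ifs <;> first | rfl | omega

theorem extendByZero_dpDx_iterate (f : Fin 25 × Fin 5 → K) (n a b : ℕ) :
    extendByZero (dpDx^[n] f) a b = extendByZero f (a + n) b := by
  induction n generalizing a with
  | zero => rfl
  | succ n ih =>
    rw [Function.iterate_succ_apply', extendByZero_dpDx, ih, add_right_comm, add_assoc]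

theorem dpDx_iterate_apply (f : Fin 25 × Fin 5 → K) (n : ℕ) (k : Fin 25 × Fin 5) :
    dpDx^[n] f k = extendByZero f (k.1 + n) k.2 := by
  rw [← extendByZero_val (dpDx^[n] f), extendByZero_dpDx_iterate]

theorem extendByZero_xElt (a b : ℕ) :
    extendByZero (xElt : Fin 25 × Fin 5 → K) a b = if a = 1 ∧ b = 0 then 1 else 0 := by
  unfold extendByZero xElt
  split_ifs <;> first | rfl | omega

theorem extendByZero_dpOne2 (a b : ℕ) :
    extendByZero (dpOne2 : Fin 25 × Fin 5 → K) a b = if a = 0 ∧ b = 0 then 1 else 0 := by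
  unfold extendByZero dpOne2
  split_ifs <;> first | rfl | omega

theorem dpMul2_apply (f g : Fin 25 × Fin 5 → K) (k : Fin 25 × Fin 5) :
    dpMul2 f g k = ∑ y ∈ antidiagonal (k.2 : ℕ), ((k.2 : ℕ).choose y.1 : K) *
      dpConv (fun a => extendByZero f a y.1) (fun c => extendByZero g c y.2) k.1 := by
  obtain ⟨⟨m, hm⟩, ⟨n, hn⟩⟩ := k
  simp only [dpMul2, dpConv, mul_sum]
  rw [← Fintype.sum_prod_type', ← sum_filter]
  conv_rhs => rw [sum_comm, ← sum_product']
  refine sum_bij (fun z _ => ((z.1.1, z.2.1), (z.1.2, z.2.2))) ?_ ?_ ?_ ?_ <;>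
    simp only [mem_filter, mem_univ, true_and]
  · rintro ⟨i, j⟩ hij
    simp [hij]
  · rintro ⟨i, j⟩ - ⟨i', j'⟩ - h
    simp only [Prod.mk.injEq, Fin.val_inj] at h
    exact Prod.ext (Prod.ext h.1.1 h.2.1) (Prod.ext h.1.2 h.2.2)
  · rintro ⟨⟨a, c⟩, ⟨b, d⟩⟩ h
    simp only [mem_product, HasAntidiagonal.mem_antidiagonal] at h
    exact ⟨((⟨a, by omega⟩, ⟨b, by omega⟩), (⟨c, by omega⟩, ⟨d, by omega⟩)), by simp [h], rfl⟩
  · rintro ⟨i, j⟩ hij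
    simp only [extendByZero_val, hij]
    ring

theorem dpMul2_xElt_dpDx (f : Fin 25 × Fin 5 → K) (k : Fin 25 × Fin 5) :
    dpMul2 xElt (dpDx f) k = (k.1 : K) * f k := by
  rw [dpMul2_apply, sum_eq_single (0, (k.2 : ℕ))]
  · rcases Nat.eq_zero_or_pos (k.1 : ℕ) with h | h
    · simp [extendByZero_xElt, dpConv_ite_one_left, h]
    · simp [extendByZero_xElt, dpConv_ite_one_left, extendByZero_dpDx, Nat.sub_add_cancel h,
        extendByZero_val]
  · rintro ⟨b, d⟩ hy hne
    have hb : b ≠ 0 := by rintro rfl; simp_all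
    simp [extendByZero_xElt, hb, dpConv]
  · simp

theorem dpMul2_dpOne2 (f : Fin 25 × Fin 5 → K) : dpMul2 f dpOne2 = f := by
  funext k
  rw [dpMul2_apply, sum_eq_single ((k.2 : ℕ), 0)]
  · simp [extendByZero_dpOne2, dpConv_ite_zero_right, extendByZero_val]
  · rintro ⟨b, d⟩ hy hne
    have hd : d ≠ 0 := by rintro rfl; simp_all
    simp [extendByZero_dpOne2, hd, dpConv]
  · simp

theorem genE_apply (f : Fin 25 × Fin 5 → K) (k : Fin 25 × Fin 5) :
    genE f k = (1 - k.1) * f k := by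
  rw [genE, Pi.sub_apply, dpMul2_xElt_dpDx, sub_mul, one_mul]

theorem genE_dpOne2 : genE (dpOne2 : Fin 25 × Fin 5 → K) = dpOne2 := by
  funext k
  rw [genE_apply]
  by_cases h : (k.1 : ℕ) = 0
  · simp [h]
  · simp [dpOne2, h]

theorem extendByZero_genE (f : Fin 25 × Fin 5 → K) (a b : ℕ) :
    extendByZero (genE f) a b = (1 - a) * extendByZero f a b := by
  unfold extendByZero
  split_ifs
  · rw [genE_apply]
  · rw [mul_zero]

theorem genE_dpDx_iterate (n : ℕ) (f : Fin 25 × Fin 5 → K) :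
    genE (dpDx^[n] f) = dpDx^[n] (genE f) + (n : K) • dpDx^[n] f := by
  funext k
  simp only [Pi.add_apply, Pi.smul_apply, smul_eq_mul, genE_apply, dpDx_iterate_apply,
    extendByZero_genE]
  push_cast
  ring

theorem genE_dpMul2 (f g : Fin 25 × Fin 5 → K) :
    genE (dpMul2 f g)
      = dpMul2 (genE f) g + dpMul2 f (genE g) - dpMul2 (dpMul2 f g) (genE dpOne2) := by
  rw [genE_dpOne2, dpMul2_dpOne2]
  funext k
  simp only [dpMul2, Pi.add_apply, Pi.sub_apply, genE_apply, mul_sum, ← sum_add_distrib,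
    ← sum_sub_distrib]
  refine sum_congr rfl fun i _ => sum_congr rfl fun j _ => ?_
  split_ifs with h
  · have hk : ((k.1 : ℕ) : K) = ((i.1 : ℕ) : K) + ((j.1 : ℕ) : K) := by
      rw [← h.1, Nat.cast_add]
    rw [hk]
    ring
  · simp

theorem extendByZero_dpMul2 [CharP K 5] (f g : Fin 25 × Fin 5 → K) (M : ℕ) {n : ℕ}
    (hn : n < 5) :
    extendByZero (dpMul2 f g) M n = ∑ y ∈ antidiagonal n, (n.choose y.1 : K) *
      dpConv (fun a => extendByZero f a y.1) (fun c => extendByZero g c y.2) M := by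
  have : Fact (Nat.Prime 5) := ⟨Nat.prime_five⟩
  by_cases hM : M < 25
  · rw [extendByZero, dif_pos ⟨hM, hn⟩, dpMul2_apply]
  · refine (extendByZero_of_le _ _ (not_lt.1 hM)).trans (sum_eq_zero fun y _ => ?_).symm
    rw [dpConv_eq_zero_of_pow_le 5 (e := 2) (fun a ha => extendByZero_of_le _ _ ha)
      (fun c hc => extendByZero_of_le _ _ hc) (not_lt.1 hM), mul_zero]

theorem dpDx_iterate_five_dpMul2 [CharP K 5] (f g : Fin 25 × Fin 5 → K) :
    dpDx^[5] (dpMul2 f g) = dpMul2 (dpDx^[5] f) g + dpMul2 f (dpDx^[5] g) := by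
  have : Fact (Nat.Prime 5) := ⟨Nat.prime_five⟩
  funext k
  rw [Pi.add_apply, dpDx_iterate_apply, extendByZero_dpMul2 _ _ _ k.2.isLt, dpMul2_apply,
    dpMul2_apply, ← sum_add_distrib]
  refine sum_congr rfl fun y _ => ?_
  simp only [extendByZero_dpDx_iterate, dpConv_add_prime 5, mul_add]

end TruncatedAlgebra

/-- In `O₂(2,1)` over a field of characteristic 5: the maps `id - x∂_x` and `∂_x⁵`
commute, `id - x∂_x` is a generalized derivation, and `∂_x⁵` is a derivation. -/
theorem genE_dpDx5 {K : Type*} [Field K] [CharP K 5] :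
    (∀ f : Fin 25 × Fin 5 → K, genE (dpDx^[5] f) = dpDx^[5] (genE f)) ∧
    (∀ f g : Fin 25 × Fin 5 → K,
      genE (dpMul2 f g)
        = dpMul2 (genE f) g + dpMul2 f (genE g) - dpMul2 (dpMul2 f g) (genE dpOne2)) ∧
    (∀ f g : Fin 25 × Fin 5 → K,
      dpDx^[5] (dpMul2 f g) = dpMul2 (dpDx^[5] f) g + dpMul2 f (dpDx^[5] g)) := by
  refine ⟨fun f => ?_, genE_dpMul2, dpDx_iterate_five_dpMul2⟩
  rw [genE_dpDx_iterate, CharP.cast_eq_zero, zero_smul, add_zero]
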